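/- arXiv:1309.5567 — 4 statements merged into one kernel-verified Lean document; each statement's English description precedes it below -/
import Mathlib

section
/- Let k ≥ 0 and let μ be the measure on ℝ given by dμ(x) = |x|^{2k} dx. Then there exist positive constants c, C such that for all x ∈ ℝ and r > 0: c·(|x|+r)^{2k}·r ≤ μ(B(x,r)) ≤ C·(|x|+r)^{2k}·r, where B(x,r) is the closed interval [x−r, x+r]. -/
open Real MeasureTheory

/-- The measure `|x|^{2k} dx` on `ℝ`. -/
noncomputable def dunklMeasure1 (k : ℝ) : Measure ℝ :=
  volume.withDensity (fun x => ENNReal.ofReal (|x| ^ (2 * k)))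

lemma lower_aux (k : ℝ) (hk : 0 ≤ k) (x r : ℝ) (hr : 0 < r) (a : ℝ)
    (hsub : Set.Icc a (a + r / 2) ⊆ Metric.closedBall x r)
    (hlb : ∀ t ∈ Set.Icc a (a + r / 2), (|x| + r) / 2 ≤ |t|) :
    ENNReal.ofReal ((1 / 2 : ℝ) ^ (2 * k) / 2 * (|x| + r) ^ (2 * k) * r) ≤
      dunklMeasure1 k (Metric.closedBall x r) := by
  have hxr : (0 : ℝ) ≤ |x| + r := by positivity
  rw [dunklMeasure1, withDensity_apply _ measurableSet_closedBall]
  calc ENNReal.ofReal ((1 / 2 : ℝ) ^ (2 * k) / 2 * (|x| + r) ^ (2 * k) * r)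
      = ENNReal.ofReal (((|x| + r) / 2) ^ (2 * k)) * volume (Set.Icc a (a + r / 2)) := by
        rw [Real.volume_Icc, show a + r / 2 - a = r / 2 by ring,
          ← ENNReal.ofReal_mul (by positivity)]
        congr 1
        rw [show (|x| + r) / 2 = (1 / 2) * (|x| + r) by ring,
          Real.mul_rpow (by norm_num) hxr]
        ring
    _ = ∫⁻ _ in Set.Icc a (a + r / 2), ENNReal.ofReal (((|x| + r) / 2) ^ (2 * k)) :=
        (setLIntegral_const _ _).symm
    _ ≤ ∫⁻ t in Set.Icc a (a + r / 2), ENNReal.ofReal (|t| ^ (2 * k)) := by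
        refine setLIntegral_mono' measurableSet_Icc fun t ht => ?_
        exact ENNReal.ofReal_le_ofReal
          (Real.rpow_le_rpow (by positivity) (hlb t ht) (by positivity))
    _ ≤ ∫⁻ t in Metric.closedBall x r, ENNReal.ofReal (|t| ^ (2 * k)) :=
        lintegral_mono' (Measure.restrict_mono hsub le_rfl) le_rfl

theorem measure_ball_comparable (k : ℝ) (hk : 0 ≤ k) :
    ∃ c > 0, ∃ C > 0, ∀ x : ℝ, ∀ r : ℝ, 0 < r →
      ENNReal.ofReal (c * (|x| + r) ^ (2 * k) * r) ≤
        dunklMeasure1 k (Metric.closedBall x r) ∧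
      dunklMeasure1 k (Metric.closedBall x r) ≤
        ENNReal.ofReal (C * (|x| + r) ^ (2 * k) * r) := by
  refine ⟨(1 / 2 : ℝ) ^ (2 * k) / 2, by positivity, 2, by norm_num, fun x r hr => ?_⟩
  have hxr : (0 : ℝ) ≤ |x| + r := by positivity
  constructor
  · rcases le_or_gt 0 x with hx | hx
    · refine lower_aux k hk x r hr (x + r / 2) ?_ ?_
      · rw [Real.closedBall_eq_Icc]
        intro t ht
        constructor <;> [linarith [ht.1]; linarith [ht.2]]
      · intro t ht
        have ht0 : 0 ≤ t := by linarith [ht.1]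
        rw [abs_of_nonneg ht0, abs_of_nonneg hx]
        linarith [ht.1]
    · refine lower_aux k hk x r hr (x - r) ?_ ?_
      · rw [Real.closedBall_eq_Icc]
        intro t ht
        constructor <;> [linarith [ht.1]; linarith [ht.2]]
      · intro t ht
        have ht0 : t ≤ 0 := by linarith [ht.2]
        rw [abs_of_nonpos ht0, abs_of_neg hx]
        linarith [ht.2]
  · rw [dunklMeasure1, withDensity_apply _ measurableSet_closedBall]
    calc ∫⁻ t in Metric.closedBall x r, ENNReal.ofReal (|t| ^ (2 * k))
        ≤ ∫⁻ _ in Metric.closedBall x r, ENNReal.ofReal ((|x| + r) ^ (2 * k)) := by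
          refine setLIntegral_mono' measurableSet_closedBall fun t ht => ?_
          have := Metric.mem_closedBall.mp ht
          rw [Real.dist_eq] at this
          have habs : |t| ≤ |x| + r := by
            have := abs_sub_abs_le_abs_sub t x
            linarith
          exact ENNReal.ofReal_le_ofReal
            (Real.rpow_le_rpow (abs_nonneg t) habs (by positivity))
      _ = ENNReal.ofReal ((|x| + r) ^ (2 * k)) * volume (Metric.closedBall x r) :=
          setLIntegral_const _ _
      _ = ENNReal.ofReal (2 * (|x| + r) ^ (2 * k) * r) := by
          rw [Real.volume_closedBall, ← ENNReal.ofReal_mul (by positivity)]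
          congr 1; ring
end

section
/- Let k ≥ 0 and μ the measure on ℝ with density |x|^{2k}. For every ε > 0 there exists C > 0 such that μ(B(x,√t)) / μ(B(y,√t)) ≤ C·e^{ε(x−y)²/t} for all x, y ∈ ℝ and t > 0. -/
open Real MeasureTheory

/-! The measure of `B(x, r)` is comparable to `(|x| + r)^{2k} · 2r`: the density is at most
`(|x| + r)^{2k}` on the ball, and at least `((|x| + r) / 2)^{2k}` on the half of it farther from
the origin. Since `|x| + r ≤ (1 + v)(|y| + r)` with `v = |x - y| / r`, moving the centre from `y`
to `x` costs at most the factor `(1 + v)^{2k} ≤ e^{2kv} ≤ e^{k²/ε + ε v²}`. -/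

section WithDensity

variable {α : Type*} [MeasurableSpace α] {μ : Measure α} {f : α → ENNReal} {s : Set α}
  {c : ENNReal}

theorem withDensity_apply_le_mul (hs : MeasurableSet s) (h : ∀ x ∈ s, f x ≤ c) :
    μ.withDensity f s ≤ c * μ s := by
  rw [withDensity_apply f hs, ← setLIntegral_const]
  exact setLIntegral_mono' hs h

theorem mul_le_withDensity_apply (hs : MeasurableSet s) (h : ∀ x ∈ s, c ≤ f x) :
    c * μ s ≤ μ.withDensity f s := by
  rw [← setLIntegral_const]
  exact (setLIntegral_mono' hs h).trans (withDensity_apply_le f s)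

end WithDensity

theorem abs_le_abs_add_of_mem_closedBall {x s r : ℝ} (hs : s ∈ Metric.closedBall x r) :
    |s| ≤ |x| + r := by
  rw [Metric.mem_closedBall, Real.dist_eq] at hs
  linarith [abs_sub_abs_le_abs_sub s x]

theorem exists_Icc_subset_closedBall_abs_ge (y : ℝ) {r : ℝ} (hr : 0 ≤ r) :
    ∃ a, Set.Icc a (a + r / 2) ⊆ Metric.closedBall y r ∧
      ∀ s ∈ Set.Icc a (a + r / 2), (|y| + r) / 2 ≤ |s| := by
  simp only [Set.subset_def, Metric.mem_closedBall, Real.dist_eq, Set.mem_Icc, abs_le]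
  rcases le_or_gt 0 y with hy | hy
  · refine ⟨y + r / 2, fun s hs => ⟨by linarith, by linarith⟩, fun s hs => ?_⟩
    rw [abs_of_nonneg hy, abs_of_nonneg (by linarith)]
    linarith
  · refine ⟨y - r, fun s hs => ⟨by linarith, by linarith⟩, fun s hs => ?_⟩
    rw [abs_of_neg hy, abs_of_nonpos (by linarith)]
    linarith

theorem dunklMeasure1_closedBall_le {k : ℝ} (hk : 0 ≤ k) (x : ℝ) {r : ℝ} (hr : 0 ≤ r) :
    dunklMeasure1 k (Metric.closedBall x r) ≤
      ENNReal.ofReal ((|x| + r) ^ (2 * k) * (2 * r)) := by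
  have hdensity : ∀ s ∈ Metric.closedBall x r,
      ENNReal.ofReal (|s| ^ (2 * k)) ≤ ENNReal.ofReal ((|x| + r) ^ (2 * k)) := fun s hs =>
    ENNReal.ofReal_le_ofReal <| Real.rpow_le_rpow (abs_nonneg s)
      (abs_le_abs_add_of_mem_closedBall hs) (by positivity)
  calc dunklMeasure1 k (Metric.closedBall x r)
      ≤ ENNReal.ofReal ((|x| + r) ^ (2 * k)) * volume (Metric.closedBall x r) :=
        withDensity_apply_le_mul measurableSet_closedBall hdensity
    _ = ENNReal.ofReal ((|x| + r) ^ (2 * k) * (2 * r)) := by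
        rw [Real.volume_closedBall, ← ENNReal.ofReal_mul (by positivity)]

theorem ofReal_le_mul_dunklMeasure1_closedBall {k : ℝ} (hk : 0 ≤ k) (y : ℝ) {r : ℝ}
    (hr : 0 ≤ r) :
    ENNReal.ofReal ((|y| + r) ^ (2 * k) * (2 * r)) ≤
      ENNReal.ofReal (4 * 2 ^ (2 * k)) * dunklMeasure1 k (Metric.closedBall y r) := by
  obtain ⟨a, hsub, hfar⟩ := exists_Icc_subset_closedBall_abs_ge y hr
  have hdensity : ∀ s ∈ Set.Icc a (a + r / 2),
      ENNReal.ofReal (((|y| + r) / 2) ^ (2 * k)) ≤ ENNReal.ofReal (|s| ^ (2 * k)) := fun s hs =>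
    ENNReal.ofReal_le_ofReal <| Real.rpow_le_rpow (by positivity) (hfar s hs) (by positivity)
  have hsplit : (|y| + r) ^ (2 * k) * (2 * r) =
      4 * 2 ^ (2 * k) * (((|y| + r) / 2) ^ (2 * k) * (r / 2)) := by
    rw [Real.div_rpow (by positivity) zero_le_two]
    field_simp
    ring
  rw [hsplit, ENNReal.ofReal_mul (by positivity)]
  gcongr
  calc ENNReal.ofReal (((|y| + r) / 2) ^ (2 * k) * (r / 2))
      = ENNReal.ofReal (((|y| + r) / 2) ^ (2 * k)) * volume (Set.Icc a (a + r / 2)) := by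
        rw [Real.volume_Icc, add_sub_cancel_left, ENNReal.ofReal_mul (by positivity)]
    _ ≤ dunklMeasure1 k (Set.Icc a (a + r / 2)) :=
        mul_le_withDensity_apply measurableSet_Icc hdensity
    _ ≤ dunklMeasure1 k (Metric.closedBall y r) := measure_mono hsub

theorem one_add_rpow_le_exp_mul_exp {k ε v : ℝ} (hk : 0 ≤ k) (hε : 0 < ε) (hv : -1 ≤ v) :
    (1 + v) ^ (2 * k) ≤ exp (k ^ 2 / ε) * exp (ε * v ^ 2) := by
  have hamgm : v * (2 * k) ≤ k ^ 2 / ε + ε * v ^ 2 := by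
    rw [div_add' _ _ _ hε.ne', le_div_iff₀ hε]
    nlinarith [sq_nonneg (ε * v - k)]
  calc (1 + v) ^ (2 * k) ≤ exp v ^ (2 * k) :=
        Real.rpow_le_rpow (by linarith) (by linarith [add_one_le_exp v]) (by positivity)
    _ = exp (v * (2 * k)) := by rw [← Real.exp_mul]
    _ ≤ exp (k ^ 2 / ε) * exp (ε * v ^ 2) := by rw [← Real.exp_add]; exact exp_le_exp.2 hamgm

theorem abs_add_rpow_le_exp_mul_exp {k ε : ℝ} (hk : 0 ≤ k) (hε : 0 < ε) (x y : ℝ) {r : ℝ}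
    (hr : 0 < r) :
    (|x| + r) ^ (2 * k) ≤
      exp (k ^ 2 / ε) * exp (ε * (x - y) ^ 2 / r ^ 2) * (|y| + r) ^ (2 * k) := by
  set v := |x - y| / r
  have hv : 0 ≤ v := by positivity
  have hcentre : |x| + r ≤ (1 + v) * (|y| + r) := by
    have hxy : |x - y| = v * r := (div_mul_cancel₀ _ hr.ne').symm
    nlinarith [abs_sub_abs_le_abs_sub x y, abs_nonneg y]
  have hv_sq : ε * (x - y) ^ 2 / r ^ 2 = ε * v ^ 2 := by
    rw [div_pow, sq_abs, mul_div_assoc]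
  calc (|x| + r) ^ (2 * k) ≤ ((1 + v) * (|y| + r)) ^ (2 * k) :=
        Real.rpow_le_rpow (by positivity) hcentre (by positivity)
    _ = (1 + v) ^ (2 * k) * (|y| + r) ^ (2 * k) := Real.mul_rpow (by positivity) (by positivity)
    _ ≤ _ := by
        rw [hv_sq]
        gcongr
        exact one_add_rpow_le_exp_mul_exp hk hε (by linarith)

theorem measure_ball_quotient_gaussian (k : ℝ) (hk : 0 ≤ k) :
    ∀ ε > (0:ℝ), ∃ C > 0, ∀ x y : ℝ, ∀ t : ℝ, 0 < t →
      dunklMeasure1 k (Metric.closedBall x (Real.sqrt t)) ≤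
        ENNReal.ofReal (C * Real.exp (ε * (x - y) ^ 2 / t)) *
          dunklMeasure1 k (Metric.closedBall y (Real.sqrt t)) := by
  intro ε hε
  refine ⟨exp (k ^ 2 / ε) * (4 * 2 ^ (2 * k)), by positivity, fun x y t ht => ?_⟩
  set r := √t
  have hr : 0 < r := Real.sqrt_pos.2 ht
  have hrt : r ^ 2 = t := Real.sq_sqrt ht.le
  have hcentre := abs_add_rpow_le_exp_mul_exp hk hε x y hr
  rw [hrt] at hcentre
  set E := exp (k ^ 2 / ε) * exp (ε * (x - y) ^ 2 / t)
  calc dunklMeasure1 k (Metric.closedBall x r)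
      ≤ ENNReal.ofReal ((|x| + r) ^ (2 * k) * (2 * r)) := dunklMeasure1_closedBall_le hk x hr.le
    _ ≤ ENNReal.ofReal (E * ((|y| + r) ^ (2 * k) * (2 * r))) := ENNReal.ofReal_le_ofReal <|
        (mul_le_mul_of_nonneg_right hcentre (by positivity)).trans_eq (mul_assoc _ _ _)
    _ ≤ ENNReal.ofReal E * (ENNReal.ofReal (4 * 2 ^ (2 * k)) *
          dunklMeasure1 k (Metric.closedBall y r)) := by
        rw [ENNReal.ofReal_mul (by positivity)]
        gcongr
        exact ofReal_le_mul_dunklMeasure1_closedBall hk y hr.le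
    _ = _ := by
        rw [← mul_assoc, ← ENNReal.ofReal_mul (by positivity)]
        congr 2
        ring
end

section
/- Let (X,d,μ) be a metric measure space in which closed balls have finite positive measure and μ is doubling. Define d̃(x,y) as the infimum of μ(B) over all closed balls B containing both x and y. Then d̃ is a quasi-distance: it is symmetric, vanishes iff x = y (assuming μ has no atoms), and there exists A ≥ 1 with d̃(x,y) ≤ A(d̃(x,z) + d̃(z,y)) for all x,y,z ∈ X. -/
open Real MeasureTheory Metric

/-- The infimum of the measures of closed balls containing both `x` and `y`. -/
noncomputable def qdist {X : Type*} [MetricSpace X] [MeasurableSpace X]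
    (μ : Measure X) (x y : X) : ENNReal :=
  ⨅ (z : X) (r : ℝ) (_ : x ∈ Metric.closedBall z r ∧ y ∈ Metric.closedBall z r),
    μ (Metric.closedBall z r)

/-!
Symmetry is built into the definition, and `d̃(x, x) = μ {x}` because `{x}` is the closed ball
of radius `0` about `x`. If `x ≠ y`, every closed ball `B(c, r)` containing both has
`r ≥ d(x, y) / 2`, so `B(c, 2r)` contains `B(x, d(x, y) / 2)` and doubling bounds `d̃(x, y)` below
by `μ (B(x, d(x, y) / 2)) / C > 0`. For the quasi-triangle inequality, if `B(c₁, r₁)` contains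
`x, z` and `B(c₂, r₂)` contains `z, y` with `r₂ ≤ r₁`, then `B(c₁, 4r₁)` contains `x` and `y`,
and doubling twice gives `d̃(x, y) ≤ max 1 C² · μ (B(c₁, r₁))`.
-/

section

variable {X : Type*} [MetricSpace X] [MeasurableSpace X] (μ : Measure X)

lemma qdist_le_measure_closedBall {x y c : X} {r : ℝ}
    (hx : x ∈ closedBall c r) (hy : y ∈ closedBall c r) :
    qdist μ x y ≤ μ (closedBall c r) :=
  iInf₂_le_of_le c r (iInf_le _ ⟨hx, hy⟩)

lemma le_qdist {x y : X} {a : ENNReal}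
    (h : ∀ c r, x ∈ closedBall c r → y ∈ closedBall c r → a ≤ μ (closedBall c r)) :
    a ≤ qdist μ x y :=
  le_iInf₂ fun c r => le_iInf fun hxy => h c r hxy.1 hxy.2

lemma qdist_comm (x y : X) : qdist μ x y = qdist μ y x :=
  iInf_congr fun _ => iInf_congr fun _ => iInf_congr_Prop and_comm fun _ => rfl

lemma qdist_self (x : X) : qdist μ x x = μ {x} := by
  refine le_antisymm ?_ (le_qdist μ fun c r hx _ => measure_mono (Set.singleton_subset_iff.2 hx))
  have hx : x ∈ closedBall x 0 := mem_closedBall_self le_rfl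
  simpa only [closedBall_zero] using qdist_le_measure_closedBall μ hx hx

variable {μ} {C : ENNReal}
  (hdoubling : ∀ (x : X) (r : ℝ), 0 < r →
    μ (closedBall x (2 * r)) ≤ C * μ (closedBall x r))
include hdoubling

lemma measure_closedBall_half_dist_div_le_qdist {x y : X} (hxy : x ≠ y) :
    μ (closedBall x (dist x y / 2)) / C ≤ qdist μ x y := by
  refine le_qdist μ fun c r hx hy => ENNReal.div_le_of_le_mul' ?_
  rw [mem_closedBall] at hx hy
  have hr : dist x y / 2 ≤ r := by linarith [dist_triangle_right x y c]
  have hsub : closedBall x (dist x y / 2) ⊆ closedBall c (2 * r) := fun w hw => by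
    rw [mem_closedBall] at hw ⊢
    linarith [dist_triangle w x c]
  calc μ (closedBall x (dist x y / 2)) ≤ μ (closedBall c (2 * r)) := measure_mono hsub
    _ ≤ C * μ (closedBall c r) := hdoubling c r (by linarith [dist_pos.2 hxy])

lemma qdist_ne_zero (hpos : ∀ (x : X) (r : ℝ), 0 < r → 0 < μ (closedBall x r))
    (hC : C < ⊤) {x y : X} (hxy : x ≠ y) : qdist μ x y ≠ 0 := by
  intro h
  have hdiv := measure_closedBall_half_dist_div_le_qdist hdoubling hxy
  rw [h, nonpos_iff_eq_zero, ENNReal.div_eq_zero_iff] at hdiv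
  rcases hdiv with hzero | htop
  · exact (hpos x _ (by linarith [dist_pos.2 hxy])).ne' hzero
  · exact hC.ne htop

lemma measure_closedBall_four_mul_le (c : X) {r : ℝ} (hr : 0 ≤ r) :
    μ (closedBall c (4 * r)) ≤ max 1 (C * C) * μ (closedBall c r) := by
  rcases hr.eq_or_lt with rfl | hr
  · simpa only [mul_zero] using le_mul_of_one_le_left zero_le (le_max_left _ _)
  calc μ (closedBall c (4 * r)) = μ (closedBall c (2 * (2 * r))) := by ring_nf
    _ ≤ C * (C * μ (closedBall c r)) :=
        (hdoubling c _ (by positivity)).trans (mul_le_mul_right (hdoubling c r hr) C)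
    _ ≤ max 1 (C * C) * μ (closedBall c r) := by
        rw [← mul_assoc]; exact mul_le_mul_left (le_max_right _ _) _

lemma qdist_le_of_radius_le {x y z c₁ c₂ : X} {r₁ r₂ : ℝ}
    (hx : x ∈ closedBall c₁ r₁) (hz₁ : z ∈ closedBall c₁ r₁)
    (hz₂ : z ∈ closedBall c₂ r₂) (hy : y ∈ closedBall c₂ r₂) (hr : r₂ ≤ r₁) :
    qdist μ x y ≤ max 1 (C * C) * μ (closedBall c₁ r₁) := by
  rw [mem_closedBall] at hx hz₁ hz₂ hy
  have hr₁ : 0 ≤ r₁ := dist_nonneg.trans hx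
  refine (qdist_le_measure_closedBall μ (r := 4 * r₁) ?_ ?_).trans
    (measure_closedBall_four_mul_le hdoubling c₁ hr₁) <;> rw [mem_closedBall]
  · linarith
  · linarith [dist_triangle y z c₁, dist_triangle_right y z c₂]

lemma qdist_le_mul_add (hC : C < ⊤) (x y z : X) :
    qdist μ x y ≤ max 1 (C * C) * (qdist μ x z + qdist μ z y) := by
  set A := max 1 (C * C)
  have hA₀ : A ≠ 0 := (zero_lt_one.trans_le (le_max_left _ _)).ne'
  have hA : A ≠ ⊤ := (max_lt ENNReal.one_lt_top (ENNReal.mul_lt_top hC hC)).ne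
  rw [mul_comm, ← ENNReal.div_le_iff hA₀ hA]
  refine ENNReal.le_iInf₂_add_iInf₂ fun c₁ r₁ c₂ r₂ =>
    ENNReal.le_iInf_add_iInf fun ⟨hx, hz₁⟩ ⟨hz₂, hy⟩ => ENNReal.div_le_of_le_mul' ?_
  rcases le_total r₂ r₁ with hr | hr
  · exact (qdist_le_of_radius_le hdoubling hx hz₁ hz₂ hy hr).trans
      (mul_le_mul_right le_self_add _)
  · rw [qdist_comm]
    exact (qdist_le_of_radius_le hdoubling hy hz₂ hz₁ hx hr).trans
      (mul_le_mul_right le_add_self _)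

end

theorem qdist_is_quasi_distance_general {X : Type*} [MetricSpace X] [MeasurableSpace X]
    (μ : Measure X)
    (hpos : ∀ (x : X) (r : ℝ), 0 < r → 0 < μ (Metric.closedBall x r))
    (C : ENNReal) (hC : C < ⊤)
    (hdoubling : ∀ (x : X) (r : ℝ), 0 < r →
      μ (Metric.closedBall x (2 * r)) ≤ C * μ (Metric.closedBall x r)) :
    (∀ x y : X, qdist μ x y = qdist μ y x) ∧
    ((∀ x : X, μ {x} = 0) → ∀ x y : X, qdist μ x y = 0 ↔ x = y) ∧
    (∃ A : ENNReal, 1 ≤ A ∧ A < ⊤ ∧ ∀ x y z : X,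
      qdist μ x y ≤ A * (qdist μ x z + qdist μ z y)) := by
  refine ⟨qdist_comm μ, fun hatom x y => ⟨?_, ?_⟩, ?_⟩
  · exact fun h => by_contra fun hxy => qdist_ne_zero hdoubling hpos hC hxy h
  · rintro rfl
    rw [qdist_self, hatom]
  · exact ⟨max 1 (C * C), le_max_left _ _, max_lt ENNReal.one_lt_top (ENNReal.mul_lt_top hC hC),
      qdist_le_mul_add hdoubling hC⟩

theorem qdist_is_quasi_distance {X : Type*} [MetricSpace X] [MeasurableSpace X]
    [BorelSpace X] (μ : Measure X)
    (hpos : ∀ (x : X) (r : ℝ), 0 < r → 0 < μ (Metric.closedBall x r))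
    (hfin : ∀ (x : X) (r : ℝ), μ (Metric.closedBall x r) < ⊤)
    (C : ENNReal) (hC : C < ⊤)
    (hdoubling : ∀ (x : X) (r : ℝ), 0 < r →
      μ (Metric.closedBall x (2 * r)) ≤ C * μ (Metric.closedBall x r)) :
    (∀ x y : X, qdist μ x y = qdist μ y x) ∧
    ((∀ x : X, μ {x} = 0) → ∀ x y : X, qdist μ x y = 0 ↔ x = y) ∧
    (∃ A : ENNReal, 1 ≤ A ∧ A < ⊤ ∧ ∀ x y z : X,
      qdist μ x y ≤ A * (qdist μ x z + qdist μ z y)) :=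
  qdist_is_quasi_distance_general μ hpos C hC hdoubling
end

section
/- For 0 < a < b, the confluent hypergeometric function satisfies ₁F₁(a;b;z) ~ (Γ(b)/Γ(b−a))·|z|^{−a} as z → −∞; in particular ₁F₁(a;b;z)·|z|^{a} → Γ(b)/Γ(b−a) as z → −∞. -/
open Real MeasureTheory intervalIntegral Filter

/-- The Kummer confluent hypergeometric function `₁F₁(a;b;z)`,
via its Euler integral representation (valid for `0 < a < b`). -/
noncomputable def kummerM (a b z : ℝ) : ℝ :=
  (Real.Gamma b / (Real.Gamma a * Real.Gamma (b - a))) *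
    ∫ v in (0:ℝ)..1, v ^ (a - 1) * (1 - v) ^ (b - a - 1) * Real.exp (z * v)

open Set Topology

/-! Writing `z = -s`, the integral defining `₁F₁(a; b; -s)` is a Laplace transform whose
weight `v ^ (a - 1) (1 - v) ^ (b - a - 1)` behaves like `v ^ (a - 1)` at `v = 0` (Watson's lemma).
After the substitution `t = s v`, `s ^ a` times the part over `[0, 1/2]` becomes
`∫₀^{s/2} t ^ (a - 1) (1 - t / s) ^ (b - a - 1) e ^ (-t) dt`, which tends to `Γ(a)` by dominated
convergence, while `s ^ a` times the part over `[1/2, 1]` is `O(s ^ a e ^ (-s/2))`. Multiplying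
`Γ(a)` by the normalising constant `Γ(b) / (Γ(a) Γ(b - a))` gives the limit. -/

lemma rpow_mul_integral_rpow_mul_exp_neg_eq (φ : ℝ → ℝ) {a δ s : ℝ} (hs : 0 < s)
    (hδ : 0 ≤ δ) :
    s ^ a * ∫ v in (0 : ℝ)..δ, v ^ (a - 1) * φ v * exp (-(s * v)) =
      ∫ t in Ioc 0 (s * δ), t ^ (a - 1) * φ (t / s) * exp (-t) := by
  set g : ℝ → ℝ := fun t ↦ t ^ (a - 1) * φ (t / s) * exp (-t)
  have hsubst : ∫ v in (0 : ℝ)..δ, v ^ (a - 1) * φ v * exp (-(s * v)) =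
      ∫ v in (0 : ℝ)..δ, (s ^ (a - 1))⁻¹ * g (s * v) := by
    refine integral_congr fun v hv ↦ ?_
    rw [uIcc_of_le hδ] at hv
    simp only [g, mul_div_cancel_left₀ _ hs.ne', mul_rpow hs.le hv.1]
    field_simp
  have hpow : s ^ a * (s ^ (a - 1))⁻¹ * s⁻¹ = 1 := by
    rw [mul_assoc, ← mul_inv, ← rpow_add_one hs.ne', sub_add_cancel,
      mul_inv_cancel₀ (rpow_pos_of_pos hs a).ne']
  rw [hsubst, intervalIntegral.integral_const_mul, integral_comp_mul_left g hs.ne', mul_zero,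
    integral_of_le (by positivity), smul_eq_mul, ← mul_assoc, ← mul_assoc, hpow, one_mul]

theorem tendsto_integral_Ioc_rpow_mul_exp_neg {φ : ℝ → ℝ} {a δ : ℝ} (ha : 0 < a) (hδ : 0 < δ)
    (hφ : ContinuousOn φ (Icc 0 δ)) :
    Tendsto (fun s ↦ ∫ t in Ioc 0 (s * δ), t ^ (a - 1) * φ (t / s) * exp (-t)) atTop
      (𝓝 (φ 0 * Gamma a)) := by
  set F : ℝ → ℝ → ℝ := fun s ↦
    (Ioc 0 (s * δ)).indicator fun t ↦ t ^ (a - 1) * φ (t / s) * exp (-t)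
  obtain ⟨M, hM⟩ := isCompact_Icc.exists_bound_of_continuousOn hφ
  have hmaps {s t : ℝ} (hs : 0 < s) (ht : t ∈ Ioc 0 (s * δ)) : t / s ∈ Icc 0 δ :=
    ⟨by positivity [ht.1.le], (div_le_iff₀' hs).2 ht.2⟩
  have hmem {t : ℝ} (ht : 0 < t) : ∀ᶠ s in atTop, 0 < s ∧ t ∈ Ioc 0 (s * δ) := by
    filter_upwards [eventually_ge_atTop (t / δ), eventually_gt_atTop 0] with s hs hs0
    exact ⟨hs0, ht, (div_le_iff₀ hδ).1 hs⟩
  have hF : ∀ᶠ s in atTop, ∫ t in Ioi 0, F s t =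
      ∫ t in Ioc 0 (s * δ), t ^ (a - 1) * φ (t / s) * exp (-t) := by
    filter_upwards with s
    rw [setIntegral_indicator measurableSet_Ioc, inter_eq_right.2 Ioc_subset_Ioi_self]
  rw [Gamma_eq_integral ha, ← MeasureTheory.integral_const_mul]
  refine (tendsto_integral_filter_of_dominated_convergence (fun t ↦ M * (exp (-t) * t ^ (a - 1)))
    ?meas ?bound ((GammaIntegral_convergent ha).const_mul M) ?lim).congr' hF
  case meas =>
    filter_upwards [eventually_gt_atTop 0] with s hs
    refine (aestronglyMeasurable_indicator_iff measurableSet_Ioc).2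
      (ContinuousOn.aestronglyMeasurable ?_ measurableSet_Ioc)
    exact ((continuousOn_id.rpow_const fun t ht ↦ Or.inl ht.1.ne').mul
      (hφ.comp (continuousOn_id.div_const s) fun t ht ↦ hmaps hs ht)).mul
      (continuous_exp.comp continuous_neg).continuousOn
  case bound =>
    filter_upwards [eventually_gt_atTop 0] with s hs
    filter_upwards [ae_restrict_mem measurableSet_Ioi] with t (ht : 0 < t)
    by_cases hts : t ∈ Ioc 0 (s * δ)
    · simp only [F, indicator_of_mem hts, norm_mul, norm_of_nonneg (rpow_nonneg ht.le _),
        norm_of_nonneg (exp_pos _).le]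
      have hφt := hM _ (hmaps hs hts)
      calc t ^ (a - 1) * ‖φ (t / s)‖ * exp (-t) ≤ t ^ (a - 1) * M * exp (-t) := by gcongr
        _ = M * (exp (-t) * t ^ (a - 1)) := by ring
    · simp only [F, indicator_of_notMem hts, norm_zero]
      exact mul_nonneg ((norm_nonneg _).trans (hM 0 ⟨le_rfl, hδ.le⟩)) (by positivity)
  case lim =>
    filter_upwards [ae_restrict_mem measurableSet_Ioi] with t (ht : 0 < t)
    have hquot : Tendsto (fun s ↦ t / s) atTop (𝓝[Icc 0 δ] 0) :=
      tendsto_nhdsWithin_iff.2 ⟨tendsto_const_nhds.div_atTop tendsto_id,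
        (hmem ht).mono fun s hs ↦ hmaps hs.1 hs.2⟩
    have hlim := (((hφ 0 ⟨le_rfl, hδ.le⟩).tendsto.comp hquot).const_mul (t ^ (a - 1))).mul_const
      (exp (-t))
    rw [show φ 0 * (exp (-t) * t ^ (a - 1)) = t ^ (a - 1) * φ 0 * exp (-t) by ring]
    exact hlim.congr' ((hmem ht).mono fun s hs ↦ by simp only [F, indicator_of_mem hs.2]; rfl)

theorem tendsto_rpow_mul_integral_mul_exp_neg_of_pos {g : ℝ → ℝ} (a : ℝ) {δ R : ℝ}
    (hδ : 0 < δ) (hδR : δ ≤ R) (hg : IntervalIntegrable g volume δ R) :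
    Tendsto (fun s ↦ s ^ a * ∫ v in δ..R, g v * exp (-(s * v))) atTop (𝓝 0) := by
  set K := ∫ v in δ..R, |g v|
  have hdecay : Tendsto (fun s ↦ s ^ a * exp (-δ * s) * K) atTop (𝓝 0) := by
    simpa using (tendsto_rpow_mul_exp_neg_mul_atTop_nhds_zero a δ hδ).mul_const K
  refine squeeze_zero_norm' ?_ hdecay
  filter_upwards [eventually_ge_atTop 0] with s hs
  have hexp : ∀ v ∈ Ioc δ R, ‖g v * exp (-(s * v))‖ ≤ exp (-δ * s) * |g v| := by
    intro v hv
    rw [norm_mul, norm_of_nonneg (exp_pos _).le, mul_comm, Real.norm_eq_abs]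
    gcongr
    nlinarith [hv.1]
  calc ‖s ^ a * ∫ v in δ..R, g v * exp (-(s * v))‖
      = s ^ a * ‖∫ v in δ..R, g v * exp (-(s * v))‖ := by
        rw [norm_mul, norm_of_nonneg (rpow_nonneg hs a)]
    _ ≤ s ^ a * ∫ v in δ..R, exp (-δ * s) * |g v| := by
        gcongr
        exact norm_integral_le_of_norm_le hδR (ae_of_all _ hexp) (hg.abs.const_mul _)
    _ = s ^ a * exp (-δ * s) * K := by
        rw [intervalIntegral.integral_const_mul, mul_assoc]

theorem tendsto_rpow_mul_integral_rpow_mul_exp_neg {φ : ℝ → ℝ} {a δ R : ℝ} (ha : 0 < a)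
    (hδ : 0 < δ) (hδR : δ ≤ R) (hφ : ContinuousOn φ (Icc 0 δ))
    (hint : IntervalIntegrable (fun v ↦ v ^ (a - 1) * φ v) volume δ R) :
    Tendsto (fun s ↦ s ^ a * ∫ v in (0 : ℝ)..R, v ^ (a - 1) * φ v * exp (-(s * v))) atTop
      (𝓝 (φ 0 * Gamma a)) := by
  have hexp {s : ℝ} : Continuous fun v : ℝ ↦ exp (-(s * v)) := by fun_prop
  have hnear (s : ℝ) :
      IntervalIntegrable (fun v ↦ v ^ (a - 1) * φ v * exp (-(s * v))) volume 0 δ := by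
    simpa only [mul_assoc] using
      (intervalIntegral.intervalIntegrable_rpow' (by linarith)).mul_continuousOn
        (by rw [uIcc_of_le hδ.le]; exact hφ.mul hexp.continuousOn)
  have hfar (s : ℝ) :
      IntervalIntegrable (fun v ↦ v ^ (a - 1) * φ v * exp (-(s * v))) volume δ R :=
    hint.mul_continuousOn hexp.continuousOn
  have hmain : Tendsto (fun s ↦ s ^ a * ∫ v in (0 : ℝ)..δ, v ^ (a - 1) * φ v * exp (-(s * v)))
      atTop (𝓝 (φ 0 * Gamma a)) := by
    refine (tendsto_integral_Ioc_rpow_mul_exp_neg ha hδ hφ).congr' ?_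
    filter_upwards [eventually_gt_atTop 0] with s hs
    exact (rpow_mul_integral_rpow_mul_exp_neg_eq φ hs hδ.le).symm
  simpa only [← integral_add_adjacent_intervals (hnear _) (hfar _), mul_add, add_zero] using
    hmain.add (tendsto_rpow_mul_integral_mul_exp_neg_of_pos a hδ hδR hint)

lemma intervalIntegrable_rpow_mul_one_sub_rpow {p q δ : ℝ} (hq : -1 < q) (hδ : 0 < δ) :
    IntervalIntegrable (fun v : ℝ ↦ v ^ p * (1 - v) ^ q) volume δ 1 := by
  have hsing : IntervalIntegrable (fun v : ℝ ↦ (1 - v) ^ q) volume δ 1 := by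
    convert (intervalIntegrable_rpow' hq).comp_sub_left 1 (a := 1 - δ) (b := 0) using 1 <;> simp
  exact hsing.continuousOn_mul (continuousOn_id.rpow_const fun v hv ↦
    Or.inl ((lt_min hδ one_pos).trans_le hv.1).ne')

theorem kummerM_asymptotics_atBot (a b : ℝ) (ha : 0 < a) (hab : a < b) :
    Filter.Tendsto (fun z : ℝ => kummerM a b z * |z| ^ a) Filter.atBot
      (nhds (Real.Gamma b / Real.Gamma (b - a))) := by
  have hφ : ContinuousOn (fun v : ℝ ↦ (1 - v) ^ (b - a - 1)) (Icc 0 (1 / 2)) :=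
    (continuousOn_const.sub continuousOn_id).rpow_const fun v hv ↦
      Or.inl (by linarith [hv.2] : (1 : ℝ) - v ≠ 0)
  have hlim := ((tendsto_rpow_mul_integral_rpow_mul_exp_neg ha one_half_pos (by norm_num) hφ
    (intervalIntegrable_rpow_mul_one_sub_rpow (by linarith) one_half_pos)).comp
    tendsto_neg_atBot_atTop).const_mul (Gamma b / (Gamma a * Gamma (b - a)))
  have hconst : Gamma b / (Gamma a * Gamma (b - a)) * ((1 - 0) ^ (b - a - 1) * Gamma a) =
      Gamma b / Gamma (b - a) := by
    rw [sub_zero, one_rpow, one_mul]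
    field_simp [(Gamma_pos_of_pos ha).ne']
  rw [hconst] at hlim
  refine hlim.congr' ?_
  filter_upwards [eventually_lt_atBot 0] with z hz
  simp only [kummerM, Function.comp, abs_of_neg hz, neg_mul, neg_neg]
  ring
end
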